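/- arXiv:2605.11356 — 2 statements merged into one kernel-verified Lean document; each statement's English description precedes it below -/
import Mathlib

section
/- (Leakage certificate.) Let u_A, u_F be independent random row vectors, each uniform, on F_2^{1×a} and F_2^{1×f} respectively. Let G_{A,P} ∈ F_2^{a×p}, G_{F,P} ∈ F_2^{f×p}, let G_P ∈ F_2^{(a+f)×p} be the vertical stacking of G_{A,P} on top of G_{F,P}, and set x_P = u_A*G_{A,P} ⊕ u_F*G_{F,P}. Then the mutual information (in bits, base 2) between the information bits and the published coordinates satisfies I(u_A ; x_P) = rank(G_P) − rank(G_{F,P}). -/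
open scoped ENNReal

/-- Shannon entropy (in bits, base 2) of a probability mass function on a finite type. -/
noncomputable def pmfEntropy {α : Type*} [Fintype α] (q : PMF α) : ℝ :=
  -∑ x : α, ((q x).toReal * Real.logb 2 (q x).toReal)

/-- Conditional Shannon entropy `H(Y | X)` (in bits, base 2):
`H(Y|X) = -∑_{x,y} P(X=x, Y=y) log₂( P(X=x, Y=y) / P(X=x) )`. -/
noncomputable def condEntropy {Ω α β : Type*} [Fintype α] [Fintype β]
    (μ : PMF Ω) (Y : Ω → β) (X : Ω → α) : ℝ :=
  -∑ x : α, ∑ y : β,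
    ((μ.map fun ω => (X ω, Y ω)) (x, y)).toReal *
      Real.logb 2
        (((μ.map fun ω => (X ω, Y ω)) (x, y)).toReal / ((μ.map X) x).toReal)

/-- Mutual information `I(X;Y) = H(Y) − H(Y|X)` (in bits, base 2). -/
noncomputable def mutualInfo {Ω α β : Type*} [Fintype α] [Fintype β]
    (μ : PMF Ω) (X : Ω → α) (Y : Ω → β) : ℝ :=
  pmfEntropy (μ.map Y) - condEntropy μ Y X

/-! Since `u_A` and `u_F` are independent and uniform, `ω = (u_A, u_F)` is uniform on
`F_2^a × F_2^f`, and the push-forward of a uniform distribution by a linear map `L` is uniform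
on `range L` (every fibre is a coset of `ker L`), so it has entropy `dim (range L)` bits.
Now `I(X;Y) = H(X) + H(Y) - H(X,Y)`, and the maps `ω ↦ u_A`, `ω ↦ x_P`, `ω ↦ (u_A, x_P)`
are linear with ranges of dimension `a`, `rank G_P` and `a + rank G_{F,P}`: the kernel of the
last one is `0 × ker G_{F,P}`. -/

open Finset Module

lemma PMF.map_apply_eq_natCard_mul {Ω γ : Type*} [Fintype Ω] (μ : PMF Ω) {c : ℝ≥0∞}
    (hμ : ∀ ω, μ ω = c) (g : Ω → γ) (y : γ) :
    μ.map g y = Nat.card {ω // g ω = y} * c := by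
  classical
  simp [PMF.map_apply, tsum_fintype, hμ, eq_comm, Finset.sum_ite, Nat.card_eq_fintype_card,
    Fintype.card_subtype]

lemma PMF.map_fst_apply {α β : Type*} [Fintype α] [Fintype β] (q : PMF (α × β)) (x : α) :
    q.map Prod.fst x = ∑ y, q (x, y) := by
  classical
  rw [PMF.map_apply, tsum_fintype, Fintype.sum_prod_type, Finset.sum_comm]
  simp

lemma PMF.apply_eq_inv_card_of_indep {α β : Type*} [Fintype α] [Fintype β] (μ : PMF (α × β))
    (hα : ∀ x, μ.map Prod.fst x = (Fintype.card α : ℝ≥0∞)⁻¹)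
    (hβ : ∀ y, μ.map Prod.snd y = (Fintype.card β : ℝ≥0∞)⁻¹)
    (hindep : ∀ x y, μ (x, y) = μ.map Prod.fst x * μ.map Prod.snd y) (z : α × β) :
    μ z = (Nat.card (α × β) : ℝ≥0∞)⁻¹ := by
  rw [hindep, hα, hβ, Nat.card_eq_fintype_card, Fintype.card_prod, Nat.cast_mul,
    ENNReal.mul_inv (by simp) (by simp)]

lemma AddMonoidHom.natCard_fiber_eq_natCard_ker {G H : Type*} [AddGroup G] [AddGroup H]
    (φ : G →+ H) {y : H} (hy : y ∈ φ.range) : Nat.card {g // φ g = y} = Nat.card φ.ker := by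
  obtain ⟨g₀, rfl⟩ := hy
  exact Nat.card_congr <| (Equiv.subRight g₀).subtypeEquiv fun g => by
    simp [AddMonoidHom.mem_ker, sub_eq_zero]

lemma PMF.map_addMonoidHom_eq_indicator_of_uniform {G H : Type*} [AddGroup G] [Fintype G]
    [AddGroup H] (μ : PMF G) (hμ : ∀ g, μ g = (Nat.card G : ℝ≥0∞)⁻¹) (φ : G →+ H) :
    ⇑(μ.map φ) = (φ.range : Set H).indicator fun _ => (Nat.card φ.range : ℝ≥0∞)⁻¹ := by
  funext y
  rw [μ.map_apply_eq_natCard_mul hμ]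
  by_cases hy : y ∈ φ.range
  · have hker : (Nat.card φ.ker : ℝ≥0∞) ≠ 0 := by exact_mod_cast Nat.card_pos.ne'
    rw [Set.indicator_of_mem hy, φ.natCard_fiber_eq_natCard_ker hy, ← φ.ker.card_mul_index,
      AddSubgroup.index_ker, Nat.cast_mul, ENNReal.mul_inv (by simp) (by simp),
      ← mul_assoc, ENNReal.mul_inv_cancel hker (by simp), one_mul]
  · have : IsEmpty {g // φ g = y} := ⟨fun g => hy ⟨g.1, g.2⟩⟩
    rw [Set.indicator_of_notMem hy]
    simp

lemma pmfEntropy_eq_logb_natCard {α : Type*} [Fintype α] (q : PMF α) (s : Set α)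
    (hq : ⇑q = s.indicator fun _ => (Nat.card s : ℝ≥0∞)⁻¹) :
    pmfEntropy q = Real.logb 2 (Nat.card s) := by
  classical
  have hterm : ∀ x, (q x).toReal * Real.logb 2 (q x).toReal
      = if x ∈ s then (Nat.card s : ℝ)⁻¹ * Real.logb 2 (Nat.card s : ℝ)⁻¹ else 0 := by
    intro x
    by_cases hx : x ∈ s <;> simp [hq, hx]
  have hcard : (Nat.card s : ℝ) = #(univ.filter (· ∈ s)) := by
    simp [Nat.card_eq_fintype_card, Fintype.card_subtype]
  rw [pmfEntropy, Fintype.sum_congr _ _ hterm, Finset.sum_ite, Finset.sum_const_zero, add_zero,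
    Finset.sum_const, nsmul_eq_mul, Real.logb_inv, hcard]
  rcases eq_or_ne (#(univ.filter (· ∈ s)) : ℝ) 0 with h | h
  · simp [h]
  · field_simp

lemma condEntropy_eq_pmfEntropy_sub {Ω α β : Type*} [Fintype α] [Fintype β]
    (μ : PMF Ω) (Y : Ω → β) (X : Ω → α) :
    condEntropy μ Y X = pmfEntropy (μ.map fun ω => (X ω, Y ω)) - pmfEntropy (μ.map X) := by
  rw [condEntropy, pmfEntropy, pmfEntropy]
  set q := μ.map fun ω => (X ω, Y ω)
  have hmarg : ∀ x, (μ.map X x).toReal = ∑ y, (q (x, y)).toReal := by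
    intro x
    rw [show μ.map X = q.map Prod.fst by rw [PMF.map_comp]; rfl, PMF.map_fst_apply,
      ENNReal.toReal_sum fun y _ => PMF.apply_ne_top _ _]
  have hterm : ∀ x y, (q (x, y)).toReal * Real.logb 2 ((q (x, y)).toReal / (μ.map X x).toReal)
      = (q (x, y)).toReal * Real.logb 2 (q (x, y)).toReal
        - (q (x, y)).toReal * Real.logb 2 (μ.map X x).toReal := by
    intro x y
    rcases (ENNReal.toReal_nonneg (a := q (x, y))).eq_or_lt with h | h
    · simp [← h]
    have hle : (q (x, y)).toReal ≤ (μ.map X x).toReal := hmarg x ▸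
      Finset.single_le_sum (f := fun y => (q (x, y)).toReal)
        (fun y _ => ENNReal.toReal_nonneg) (Finset.mem_univ y)
    rw [Real.logb_div h.ne' (h.trans_le hle).ne', mul_sub]
  simp only [hterm, Finset.sum_sub_distrib, Fintype.sum_prod_type, ← Finset.sum_mul, ← hmarg]
  ring

lemma mutualInfo_eq_pmfEntropy_add_sub {Ω α β : Type*} [Fintype α] [Fintype β]
    (μ : PMF Ω) (X : Ω → α) (Y : Ω → β) :
    mutualInfo μ X Y = pmfEntropy (μ.map X) + pmfEntropy (μ.map Y)
      - pmfEntropy (μ.map fun ω => (X ω, Y ω)) := by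
  rw [mutualInfo, condEntropy_eq_pmfEntropy_sub]
  ring

lemma pmfEntropy_map_addMonoidHom {G H : Type*} [AddGroup G] [Fintype G] [AddGroup H]
    [Fintype H] (μ : PMF G) (hμ : ∀ g, μ g = (Nat.card G : ℝ≥0∞)⁻¹) (φ : G →+ H) :
    pmfEntropy (μ.map φ) = Real.logb 2 (Nat.card φ.range) :=
  pmfEntropy_eq_logb_natCard _ _ (μ.map_addMonoidHom_eq_indicator_of_uniform hμ φ)

lemma pmfEntropy_map_linearMap {K V W : Type*} [Field K] [Fintype K] [AddCommGroup V]
    [Module K V] [Fintype V] [AddCommGroup W] [Module K W] [Fintype W]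
    (μ : PMF V) (hμ : ∀ v, μ v = (Nat.card V : ℝ≥0∞)⁻¹) (L : V →ₗ[K] W) :
    pmfEntropy (μ.map L) = finrank K (LinearMap.range L) * Real.logb 2 (Fintype.card K) := by
  have hcard : Nat.card L.toAddMonoidHom.range = Nat.card (LinearMap.range L) := by
    rw [← LinearMap.range_toAddSubgroup]; rfl
  rw [← L.toAddMonoidHom_coe, pmfEntropy_map_addMonoidHom μ hμ, hcard,
    Module.natCard_eq_pow_finrank (K := K), Nat.cast_pow, Real.logb_pow, Nat.card_eq_fintype_card]

lemma Matrix.rank_eq_finrank_range_vecMulLinear {R m n : Type*} [Field R] [Fintype m]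
    [Fintype n] (A : Matrix m n R) : A.rank = finrank R (LinearMap.range A.vecMulLinear) := by
  rw [← rank_transpose, rank, mulVecLin_transpose]

lemma Matrix.range_vecMulLinear_fromRows {R m₁ m₂ n : Type*} [CommSemiring R] [Fintype m₁]
    [Fintype m₂] (A : Matrix m₁ n R) (B : Matrix m₂ n R) :
    LinearMap.range (fromRows A B).vecMulLinear
      = LinearMap.range (A.vecMulLinear.coprod B.vecMulLinear) := by
  rw [LinearMap.range_coprod, range_vecMulLinear, range_vecMulLinear, range_vecMulLinear,
    ← Submodule.span_union, ← Set.Sum.elim_range]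
  rfl

lemma LinearMap.finrank_range_prod_fst_coprod {K M N P : Type*} [Field K] [AddCommGroup M]
    [Module K M] [FiniteDimensional K M] [AddCommGroup N] [Module K N] [AddCommGroup P]
    [Module K P] [FiniteDimensional K P] (A : M →ₗ[K] N) (S : P →ₗ[K] N) :
    finrank K (range ((fst K M P).prod (A.coprod S)))
      = finrank K M + finrank K (range S) := by
  have hker : ker ((fst K M P).prod (A.coprod S)) = (ker S).map (inr K M P) := by
    ext ⟨m, p⟩
    simp +contextual
  have h₁ := ((fst K M P).prod (A.coprod S)).finrank_range_add_finrank_ker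
  have h₂ := S.finrank_range_add_finrank_ker
  rw [hker, (Submodule.equivMapOfInjective _ inr_injective (ker S)).finrank_eq.symm,
    finrank_prod] at h₁
  omega

/-- Leakage certificate: Let `u_A`, `u_F` be independent and uniform on
`F_2^{1×a}` and `F_2^{1×f}`, `G_P` the vertical stacking of `G_{A,P}` on `G_{F,P}`,
and `x_P = u_A * G_{A,P} ⊕ u_F * G_{F,P}`. Then
`I(u_A ; x_P) = rank(G_P) − rank(G_{F,P})`. -/
theorem leakage_certificate (a f p : ℕ)
    (GAP : Matrix (Fin a) (Fin p) (ZMod 2)) (GFP : Matrix (Fin f) (Fin p) (ZMod 2))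
    (μ : PMF ((Fin a → ZMod 2) × (Fin f → ZMod 2)))
    (huA : ∀ x : Fin a → ZMod 2,
      μ.map Prod.fst x = (Fintype.card (Fin a → ZMod 2) : ℝ≥0∞)⁻¹)
    (huF : ∀ y : Fin f → ZMod 2,
      μ.map Prod.snd y = (Fintype.card (Fin f → ZMod 2) : ℝ≥0∞)⁻¹)
    (hindep : ∀ (x : Fin a → ZMod 2) (y : Fin f → ZMod 2),
      μ (x, y) = μ.map Prod.fst x * μ.map Prod.snd y) :
    mutualInfo μ Prod.fst
        (fun ω => Matrix.vecMul ω.1 GAP + Matrix.vecMul ω.2 GFP)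
      = ((Matrix.fromRows GAP GFP).rank : ℝ) - (GFP.rank : ℝ) := by
  have hμ := μ.apply_eq_inv_card_of_indep huA huF hindep
  let X := LinearMap.fst (ZMod 2) (Fin a → ZMod 2) (Fin f → ZMod 2)
  let Y := GAP.vecMulLinear.coprod GFP.vecMulLinear
  change mutualInfo μ X Y = _
  rw [mutualInfo_eq_pmfEntropy_add_sub, show (fun ω => (X ω, Y ω)) = X.prod Y from rfl,
    pmfEntropy_map_linearMap μ hμ, pmfEntropy_map_linearMap μ hμ, pmfEntropy_map_linearMap μ hμ,
    LinearMap.finrank_range_prod_fst_coprod, Submodule.range_fst, finrank_top,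
    Matrix.rank_eq_finrank_range_vecMulLinear, Matrix.range_vecMulLinear_fromRows,
    Matrix.rank_eq_finrank_range_vecMulLinear, ZMod.card, Nat.cast_ofNat,
    Real.logb_self_eq_one one_lt_two, finrank_fin_fun]
  push_cast
  ring
end

section
/- (Zero leakage implies independence.) Let u_A be a random row vector in F_2^{1×a} and u_F a random row vector uniform on F_2^{1×f} and independent of u_A. Let G_{A,P} ∈ F_2^{a×p} and G_{F,P} ∈ F_2^{f×p} be such that every row of G_{A,P} lies in the row space of G_{F,P}. Then x_P = u_A*G_{A,P} ⊕ u_F*G_{F,P} is independent of u_A (so the public observation reveals no information about the information bits). -/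
open scoped ENNReal

/-! Uniformity makes the law of `u_F` invariant under translations, and the row-space hypothesis
gives `u_A G_{A,P} = y₀ G_{F,P}` for some `y₀` depending on `u_A`. Hence, conditionally on
`u_A = x`, the vector `x_P` is distributed as `(y₀ + u_F) G_{F,P}`, i.e. as `u_F G_{F,P}`,
whatever `x` is; a conditional law that does not depend on the condition means independence. -/

namespace PMF

variable {α β γ M : Type*}

noncomputable def prod (ν : PMF α) (ρ : PMF β) : PMF (α × β) :=
  ν.bind fun x => ρ.map (Prod.mk x)

theorem prod_apply (ν : PMF α) (ρ : PMF β) (x : α) (y : β) :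
    ν.prod ρ (x, y) = ν x * ρ y := by
  classical
  rw [prod, bind_apply, tsum_eq_single x]
  · simp [map_apply]
  · intro x' hx
    simp [map_apply, Ne.symm hx]

theorem map_snd_prod (ν : PMF α) (ρ : PMF β) : (ν.prod ρ).map Prod.snd = ρ := by
  have hsnd : ∀ x : α, Prod.snd ∘ Prod.mk x = (id : β → β) := fun _ => rfl
  simp only [prod, map_bind, map_comp, hsnd, map_id, bind_const]

theorem eq_prod_of_apply_eq_mul (μ : PMF (α × β))
    (hμ : ∀ x y, μ (x, y) = μ.map Prod.fst x * μ.map Prod.snd y) :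
    μ = (μ.map Prod.fst).prod (μ.map Prod.snd) := by
  ext ⟨x, y⟩
  rw [prod_apply, hμ]

theorem map_pair_prod_of_map_eq (ν : PMF α) (κ : PMF β) (h : α → β → γ) {ρ : PMF γ}
    (hρ : ∀ x, κ.map (h x) = ρ) :
    (ν.prod κ).map (fun ω => (ω.1, h ω.1 ω.2)) = ν.prod ρ := by
  rw [prod, prod, map_bind]
  congr 1
  funext x
  rw [map_comp, ← hρ x, map_comp]
  rfl

theorem map_pair_apply_eq_mul_of_map_eq (μ : PMF (α × β))
    (hμ : ∀ x y, μ (x, y) = μ.map Prod.fst x * μ.map Prod.snd y) (h : α → β → γ)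
    {ρ : PMF γ} (hρ : ∀ x, (μ.map Prod.snd).map (h x) = ρ) (x : α) (w : γ) :
    (μ.map fun ω => (ω.1, h ω.1 ω.2)) (x, w) =
      μ.map Prod.fst x * (μ.map fun ω => h ω.1 ω.2) w := by
  have hprod := eq_prod_of_apply_eq_mul μ hμ
  have hpair := map_pair_prod_of_map_eq (μ.map Prod.fst) _ h hρ
  have hmarg : (μ.map fun ω => h ω.1 ω.2) = ρ := by
    rw [← map_snd_prod (μ.map Prod.fst) ρ, ← hpair, ← hprod, map_comp]
    rfl
  rw [hmarg, ← prod_apply, ← hpair, ← hprod]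

theorem map_equiv_apply (p : PMF α) (e : α ≃ β) (b : β) : p.map e b = p (e.symm b) := by
  classical
  simp [map_apply, ← Equiv.symm_apply_eq]

theorem map_add_left_eq_self [AddGroup α] (p : PMF α) (hp : ∀ y₀ y, p (y₀ + y) = p y)
    (y₀ : α) : p.map (y₀ + ·) = p := by
  ext y
  simpa using (map_equiv_apply p (Equiv.addLeft y₀) y).trans (hp (-y₀) y)

theorem map_add_eq_map_of_mem_range [AddGroup β] [AddZeroClass M] (κ : PMF β)
    (hκ : ∀ y₀ y, κ (y₀ + y) = κ y) (φ : β →+ M) {m : M} (hm : m ∈ Set.range φ) :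
    κ.map (fun y => m + φ y) = κ.map φ := by
  obtain ⟨y₀, rfl⟩ := hm
  have hshift : (fun y => φ y₀ + φ y) = φ ∘ (y₀ + ·) :=
    funext fun y => (map_add φ y₀ y).symm
  rw [hshift, ← map_comp, map_add_left_eq_self κ hκ]

end PMF

theorem Matrix.vecMul_mem_range_vecMulLinear {R m n p : Type*} [CommSemiring R] [Fintype m]
    [Fintype n] {A : Matrix m p R} {B : Matrix n p R}
    (hA : ∀ i, A i ∈ Submodule.span R (Set.range B)) (x : m → R) :
    Matrix.vecMul x A ∈ LinearMap.range B.vecMulLinear := by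
  have hxA : Matrix.vecMul x A ∈ LinearMap.range A.vecMulLinear := ⟨x, rfl⟩
  rw [range_vecMulLinear] at hxA ⊢
  exact Submodule.span_le.2 (Set.range_subset_iff.2 hA) hxA

/-- Zero leakage implies independence: Let `(u_A, u_F)` have joint
distribution `μ` with `u_F` uniform on `F_2^{1×f}` and independent of `u_A`. If every
row of `G_{A,P}` lies in the row space of `G_{F,P}`, then
`x_P = u_A * G_{A,P} ⊕ u_F * G_{F,P}` is independent of `u_A`. -/
theorem zero_leakage_implies_independence (a f p : ℕ)
    (GAP : Matrix (Fin a) (Fin p) (ZMod 2)) (GFP : Matrix (Fin f) (Fin p) (ZMod 2))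
    (hrows : ∀ i : Fin a,
      GAP i ∈ Submodule.span (ZMod 2) (Set.range fun j : Fin f => GFP j))
    (μ : PMF ((Fin a → ZMod 2) × (Fin f → ZMod 2)))
    (huF : ∀ y : Fin f → ZMod 2,
      μ.map Prod.snd y = (Fintype.card (Fin f → ZMod 2) : ℝ≥0∞)⁻¹)
    (hindep : ∀ (x : Fin a → ZMod 2) (y : Fin f → ZMod 2),
      μ (x, y) = μ.map Prod.fst x * μ.map Prod.snd y) :
    ∀ (x : Fin a → ZMod 2) (w : Fin p → ZMod 2),
      (μ.map fun ω => (ω.1, Matrix.vecMul ω.1 GAP + Matrix.vecMul ω.2 GFP)) (x, w)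
        = μ.map Prod.fst x *
            (μ.map fun ω => Matrix.vecMul ω.1 GAP + Matrix.vecMul ω.2 GFP) w := by
  have hinv : ∀ y₀ y, μ.map Prod.snd (y₀ + y) = μ.map Prod.snd y :=
    fun y₀ y => (huF _).trans (huF y).symm
  have hrange : ∀ x, Matrix.vecMul x GAP ∈ Set.range (Matrix.vecMulLinear GFP).toAddMonoidHom :=
    fun x => LinearMap.mem_range.1 (Matrix.vecMul_mem_range_vecMulLinear hrows x)
  have hcond : ∀ x, (μ.map Prod.snd).map (fun y => Matrix.vecMul x GAP + Matrix.vecMul y GFP)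
      = (μ.map Prod.snd).map (Matrix.vecMulLinear GFP).toAddMonoidHom :=
    fun x => PMF.map_add_eq_map_of_mem_range _ hinv _ (hrange x)
  exact PMF.map_pair_apply_eq_mul_of_map_eq μ hindep _ hcond
end
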